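/- arXiv:2004.06934 — 2 statements merged into one kernel-verified Lean document; each statement's English description precedes it below -/
import Mathlib

section
/- IL(M) proves ⊤ ▷ A if and only if IL(M) proves Box ⊥ → A. -/
/-- Formulas of interpretability logic: ⊥, variables, →, Box, ▷. -/
inductive Formula : Type
  | bot : Formula
  | var : ℕ → Formula
  | impl : Formula → Formula → Formula
  | box : Formula → Formula
  | rhd : Formula → Formula → Formula

namespace Formula
def neg (φ : Formula) : Formula := φ.impl bot
def conj (φ ψ : Formula) : Formula := (φ.impl ψ.neg).neg
def disj (φ ψ : Formula) : Formula := φ.neg.impl ψ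
def top : Formula := neg bot
def dia (φ : Formula) : Formula := ((box φ.neg)).neg
end Formula

open Formula

/-- Hilbert-style provability in IL extended with a set `Ax` of extra axioms. -/
inductive ILProof (Ax : Set Formula) : Formula → Prop
  | ax {φ} : φ ∈ Ax → ILProof Ax φ
  | k1 (φ ψ : Formula) : ILProof Ax (φ.impl (ψ.impl φ))
  | k2 (φ ψ χ : Formula) : ILProof Ax ((φ.impl (ψ.impl χ)).impl ((φ.impl ψ).impl (φ.impl χ)))
  | dne (φ : Formula) : ILProof Ax ((φ.neg.neg).impl φ)
  | L1 (φ ψ : Formula) : ILProof Ax ((box (φ.impl ψ)).impl ((box φ).impl (box ψ)))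
  | L2 (φ : Formula) : ILProof Ax ((box φ).impl (box (box φ)))
  | L3 (φ : Formula) : ILProof Ax ((box ((box φ).impl φ)).impl (box φ))
  | J1 (φ ψ : Formula) : ILProof Ax ((box (φ.impl ψ)).impl (rhd φ ψ))
  | J2 (φ ψ χ : Formula) : ILProof Ax (((rhd φ ψ).conj (rhd ψ χ)).impl (rhd φ χ))
  | J3 (φ ψ χ : Formula) : ILProof Ax (((rhd φ χ).conj (rhd ψ χ)).impl (rhd (φ.disj ψ) χ))
  | J4 (φ ψ : Formula) : ILProof Ax ((rhd φ ψ).impl ((dia φ).impl (dia ψ)))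
  | J5 (φ : Formula) : ILProof Ax (rhd (dia φ) φ)
  | mp {φ ψ} : ILProof Ax (φ.impl ψ) → ILProof Ax φ → ILProof Ax ψ
  | nec {φ} : ILProof Ax φ → ILProof Ax (box φ)

/-- Montagna's principle M as a set of axiom instances. -/
def Mschema : Set Formula :=
  {φ | ∃ A B C : Formula,
    φ = (rhd A B).impl (rhd (A.conj (box C)) (B.conj (box C)))}

/-- Provability in IL(M). -/
def ILMProvable (φ : Formula) : Prop := ILProof Mschema φ

/-- A set of formulas is IL(X)-consistent if no finite list of its members
implies ⊥ (as an iterated implication) provably in IL(X). -/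
def Consistent (Ax : Set Formula) (Γ : Set Formula) : Prop :=
  ¬ ∃ L : List Formula, (∀ ψ ∈ L, ψ ∈ Γ) ∧
      ILProof Ax (L.foldr Formula.impl Formula.bot)

/-- Maximal IL(X)-consistent set. -/
def MCS (Ax : Set Formula) (Γ : Set Formula) : Prop :=
  Consistent Ax Γ ∧ ∀ φ : Formula, φ ∈ Γ ∨ φ.neg ∈ Γ

/-- The successor relation Γ ≺ Δ. -/
def prec (Γ Δ : Set Formula) : Prop :=
  ∀ A : Formula, box A ∈ Γ → A ∈ Δ ∧ box A ∈ Δ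

/-- The C-critical successor relation Γ ≺_C Δ. -/
def critSucc (C : Formula) (Γ Δ : Set Formula) : Prop :=
  ∀ A : Formula, rhd A C ∈ Γ → A.neg ∈ Δ ∧ box A.neg ∈ Δ

/-- Box-inclusion Γ ⊆_Box Δ. -/
def boxSub (Γ Δ : Set Formula) : Prop :=
  ∀ A : Formula, box A ∈ Γ → box A ∈ Δ
-- ===================== auxiliary development =====================
deriving instance DecidableEq for Formula

namespace ILAux

open Formula

variable {Ax : Set Formula}

/-- Derivations from a list of hypotheses (innermost first). -/
def DerivC (Ax : Set Formula) : List Formula → Formula → Prop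
  | [], φ => ILProof Ax φ
  | a :: Γ, φ => DerivC Ax Γ (a.impl φ)

theorem dThm : ∀ (Γ : List Formula) {φ : Formula}, ILProof Ax φ → DerivC Ax Γ φ
  | [], _, h => h
  | a :: Γ, φ, h => dThm Γ (ILProof.mp (ILProof.k1 φ a) h)

theorem dMp : ∀ (Γ : List Formula) {φ ψ : Formula},
    DerivC Ax Γ (φ.impl ψ) → DerivC Ax Γ φ → DerivC Ax Γ ψ
  | [], _, _, h1, h2 => ILProof.mp h1 h2
  | a :: Γ, φ, ψ, h1, h2 => dMp Γ (dMp Γ (dThm Γ (ILProof.k2 a φ ψ)) h1) h2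

theorem impRefl (φ : Formula) : ILProof Ax (φ.impl φ) :=
  ILProof.mp (ILProof.mp (ILProof.k2 φ (φ.impl φ) φ) (ILProof.k1 φ (φ.impl φ)))
    (ILProof.k1 φ φ)

theorem dHyp : ∀ (Γ : List Formula) {φ : Formula}, φ ∈ Γ → DerivC Ax Γ φ
  | a :: Γ, φ, h => by
    rcases List.mem_cons.mp h with h | h
    · subst h
      show DerivC Ax Γ (φ.impl φ)
      exact dThm Γ (impRefl φ)
    · show DerivC Ax Γ (a.impl φ)
      exact dMp Γ (dThm Γ (ILProof.k1 φ a)) (dHyp Γ h)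

theorem dTrans {Γ : List Formula} {x y z : Formula}
    (h1 : DerivC Ax Γ (x.impl y)) (h2 : DerivC Ax Γ (y.impl z)) : DerivC Ax Γ (x.impl z) :=
  dMp Γ (dMp Γ (dThm Γ (ILProof.k2 x y z)) (dMp Γ (dThm Γ (ILProof.k1 (y.impl z) x)) h2)) h1

theorem impTrans {a b c : Formula} (h1 : ILProof Ax (a.impl b)) (h2 : ILProof Ax (b.impl c)) :
    ILProof Ax (a.impl c) :=
  ILProof.mp (ILProof.mp (ILProof.k2 a b c) (ILProof.mp (ILProof.k1 (b.impl c) a) h2)) h1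

theorem exFalso (b : Formula) : ILProof Ax (Formula.bot.impl b) :=
  impTrans (ILProof.k1 Formula.bot b.neg) (ILProof.dne b)

theorem negImp (a b : Formula) : ILProof Ax ((a.neg).impl (a.impl b)) :=
  ILProof.mp (ILProof.k2 a Formula.bot b) (ILProof.mp (ILProof.k1 (Formula.bot.impl b) a) (exFalso b))

theorem negMk (a b : Formula) : ILProof Ax (a.impl ((b.neg).impl ((a.impl b).neg))) := by
  have h1 : DerivC Ax [a.impl b, b.neg, a] (a.impl b) := dHyp _ (by simp)
  have h2 : DerivC Ax [a.impl b, b.neg, a] a := dHyp _ (by simp)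
  have h3 : DerivC Ax [a.impl b, b.neg, a] b.neg := dHyp _ (by simp)
  have d : DerivC Ax [a.impl b, b.neg, a] Formula.bot := dMp _ h3 (dMp _ h1 h2)
  exact d

theorem caseSplit (a φ : Formula) :
    ILProof Ax ((a.impl φ).impl (((a.neg).impl φ).impl φ)) := by
  have contrapT : ∀ x y : Formula, ILProof Ax ((x.impl y).impl ((y.neg).impl (x.neg))) := by
    intro x y
    have h1 : DerivC Ax [x, y.neg, x.impl y] (x.impl y) := dHyp _ (by simp)
    have h2 : DerivC Ax [x, y.neg, x.impl y] x := dHyp _ (by simp)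
    have h3 : DerivC Ax [x, y.neg, x.impl y] y.neg := dHyp _ (by simp)
    have d : DerivC Ax [x, y.neg, x.impl y] Formula.bot := dMp _ h3 (dMp _ h1 h2)
    exact d
  have nnI : ∀ ψ : Formula, ILProof Ax (((ψ.neg).impl ψ).impl ((ψ.neg).impl Formula.bot)) :=
    fun ψ => ILProof.mp (ILProof.k2 ψ.neg ψ Formula.bot) (impRefl ψ.neg)
  have d : DerivC Ax [(a.neg).impl φ, a.impl φ] φ := by
    have g1 : DerivC Ax [(a.neg).impl φ, a.impl φ] (a.impl φ) := dHyp _ (by simp)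
    have g2 : DerivC Ax [(a.neg).impl φ, a.impl φ] ((a.neg).impl φ) := dHyp _ (by simp)
    have s1 : DerivC Ax [(a.neg).impl φ, a.impl φ] ((φ.neg).impl (a.neg)) :=
      dMp _ (dThm _ (contrapT a φ)) g1
    have s2 : DerivC Ax [(a.neg).impl φ, a.impl φ] ((φ.neg).impl φ) :=
      dTrans s1 g2
    have s3 : DerivC Ax [(a.neg).impl φ, a.impl φ] ((φ.neg).impl Formula.bot) :=
      dMp _ (dThm _ (nnI φ)) s2
    exact dMp _ (dThm _ (ILProof.dne φ)) s3
  exact d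

end ILAux
namespace ILAux
open Formula
variable {Ax : Set Formula}

def isAtom : Formula → Bool
  | .bot => false
  | .impl _ _ => false
  | _ => true

def atoms : Formula → List Formula
  | .bot => []
  | .impl a b => atoms a ++ atoms b
  | φ => [φ]

def eval (v : Formula → Bool) : Formula → Bool
  | .bot => false
  | .impl a b => !(eval v a) || eval v b
  | φ => v φ

def sign (v : Formula → Bool) (φ : Formula) : Formula :=
  if eval v φ then φ else φ.neg

theorem eval_atom (v : Formula → Bool) (x : Formula) (hx : isAtom x = true) :
    eval v x = v x := by
  cases x <;> first | rfl | simp [isAtom] at hx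

theorem atoms_isAtom : ∀ (φ : Formula), ∀ a ∈ atoms φ, isAtom a = true := by
  intro φ
  induction φ with
  | bot => simp [atoms]
  | impl a b iha ihb =>
    intro x hx
    rcases List.mem_append.mp hx with h | h
    · exact iha x h
    · exact ihb x h
  | var n => intro x hx; simp [atoms] at hx; subst hx; rfl
  | box a _ => intro x hx; simp [atoms] at hx; subst hx; rfl
  | rhd a b _ _ => intro x hx; simp [atoms] at hx; subst hx; rfl

theorem eval_congr (v w : Formula → Bool) :
    ∀ (φ : Formula), (∀ a ∈ atoms φ, v a = w a) → eval v φ = eval w φ := by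
  intro φ
  induction φ with
  | bot => intro _; rfl
  | impl a b iha ihb =>
    intro h
    have ha := iha (fun x hx => h x (List.mem_append.mpr (Or.inl hx)))
    have hb := ihb (fun x hx => h x (List.mem_append.mpr (Or.inr hx)))
    simp [eval, ha, hb]
  | var n => intro h; exact h _ (by simp [atoms])
  | box a _ => intro h; exact h _ (by simp [atoms])
  | rhd a b _ _ => intro h; exact h _ (by simp [atoms])

theorem kalmar (v : Formula → Bool) :
    ∀ (φ : Formula) (Γ : List Formula), (∀ a ∈ atoms φ, sign v a ∈ Γ) →
      DerivC Ax Γ (sign v φ) := by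
  intro φ
  induction φ with
  | bot =>
    intro Γ _
    have : sign v Formula.bot = Formula.bot.neg := by simp [sign, eval]
    rw [this]
    exact dThm Γ (impRefl Formula.bot)
  | var n => intro Γ h; exact dHyp Γ (h _ (by simp [atoms]))
  | box a _ => intro Γ h; exact dHyp Γ (h _ (by simp [atoms]))
  | rhd a b _ _ => intro Γ h; exact dHyp Γ (h _ (by simp [atoms]))
  | impl a b iha ihb =>
    intro Γ h
    have ha := iha Γ (fun x hx => h x (by simp [atoms, hx]))
    have hb := ihb Γ (fun x hx => h x (by simp [atoms, hx]))
    by_cases ea : eval v a = true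
    · by_cases eb : eval v b = true
      · have hs : sign v (a.impl b) = a.impl b := by simp [sign, eval, ea, eb]
        rw [hs]
        rw [sign, if_pos eb] at hb
        exact dMp Γ (dThm Γ (ILProof.k1 b a)) hb
      · have hs : sign v (a.impl b) = (a.impl b).neg := by simp [sign, eval, ea, eb]
        rw [hs]
        rw [sign, if_pos ea] at ha
        rw [sign, if_neg eb] at hb
        exact dMp Γ (dMp Γ (dThm Γ (negMk a b)) ha) hb
    · have hs : sign v (a.impl b) = a.impl b := by simp [sign, eval, ea]
      rw [hs]
      rw [sign, if_neg ea] at ha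
      exact dMp Γ (dThm Γ (negImp a b)) ha

theorem elim (φ : Formula) :
    ∀ (L : List Formula), L.Nodup → (∀ a ∈ L, isAtom a = true) →
      (∀ v : Formula → Bool, DerivC Ax (L.map (sign v)) φ) → ILProof Ax φ
  | [], _, _, h => h (fun _ => true)
  | a :: L, nd, hat, h => by
    have hane : a ∉ L := (List.nodup_cons.mp nd).1
    apply elim φ L (List.nodup_cons.mp nd).2 (fun x hx => hat x (List.mem_cons_of_mem _ hx))
    intro v
    have key : ∀ c : Bool,
        DerivC Ax ((sign (Function.update v a c) a) :: L.map (sign v)) φ := by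
      intro c
      have hv := h (Function.update v a c)
      have hmap : L.map (sign (Function.update v a c)) = L.map (sign v) := by
        apply List.map_congr_left
        intro x hx
        have hxa : x ≠ a := fun e => hane (e ▸ hx)
        have hax : isAtom x = true := hat x (List.mem_cons_of_mem _ hx)
        simp [sign, eval_atom _ x hax, Function.update_of_ne hxa]
      rw [List.map_cons, hmap] at hv
      exact hv
    have sa1 : sign (Function.update v a true) a = a := by
      simp [sign, eval_atom _ a (hat a (List.mem_cons_self))]
    have sa0 : sign (Function.update v a false) a = a.neg := by
      simp [sign, eval_atom _ a (hat a (List.mem_cons_self))]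
    have h1 := key true
    have h0 := key false
    rw [sa1] at h1
    rw [sa0] at h0
    have h1' : DerivC Ax (L.map (sign v)) (a.impl φ) := h1
    have h0' : DerivC Ax (L.map (sign v)) ((a.neg).impl φ) := h0
    exact dMp _ (dMp _ (dThm _ (caseSplit a φ)) h1') h0'

theorem tautThm (φ : Formula) (h : ∀ v : Formula → Bool, eval v φ = true) :
    ILProof Ax φ := by
  apply elim φ (atoms φ).dedup (List.nodup_dedup _)
    (fun a ha => atoms_isAtom φ a (List.mem_dedup.mp ha))
  intro v
  have k := kalmar (Ax := Ax) v φ ((atoms φ).dedup.map (sign v))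
    (fun a ha => List.mem_map_of_mem (List.mem_dedup.mpr ha))
  rw [sign, if_pos (h v)] at k
  exact k

def allVals : List Formula → List (Formula → Bool)
  | [] => [fun _ => false]
  | a :: L => (allVals L).flatMap fun w => [Function.update w a true, Function.update w a false]

theorem exists_val : ∀ (L : List Formula) (v : Formula → Bool),
    ∃ w ∈ allVals L, ∀ a ∈ L, w a = v a
  | [], _ => ⟨fun _ => false, by simp [allVals], by simp⟩
  | a :: L, v => by
    obtain ⟨w, hw, hag⟩ := exists_val L v
    refine ⟨Function.update w a (v a), ?_, ?_⟩
    · rw [allVals, List.mem_flatMap]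
      exact ⟨w, hw, by cases h : v a <;> simp [h]⟩
    · intro x hx
      rcases List.mem_cons.mp hx with rfl | hx
      · simp
      · by_cases hxa : x = a
        · subst hxa; simp
        · simp [Function.update_of_ne hxa, hag x hx]

def decideTaut (φ : Formula) : Bool :=
  (allVals (atoms φ).dedup).all fun v => eval v φ

theorem tautDec (φ : Formula) (h : decideTaut φ = true) : ILProof Ax φ := by
  apply tautThm
  intro v
  obtain ⟨w, hw, hag⟩ := exists_val (atoms φ).dedup v
  have hwφ := List.all_eq_true.mp h w hw
  have : eval v φ = eval w φ :=
    eval_congr v w φ (fun a ha => (hag a (List.mem_dedup.mpr ha)).symm)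
  rw [this]
  exact hwφ

/-- substitution -/
def subst (σ : ℕ → Formula) : Formula → Formula
  | .bot => .bot
  | .var n => σ n
  | .impl a b => (subst σ a).impl (subst σ b)
  | .box a => .box (subst σ a)
  | .rhd a b => .rhd (subst σ a) (subst σ b)

theorem subst_proof (σ : ℕ → Formula) {φ : Formula} (h : ILProof Mschema φ) :
    ILProof Mschema (subst σ φ) := by
  induction h with
  | ax hφ =>
    obtain ⟨A, B, C, rfl⟩ := hφ
    exact ILProof.ax ⟨subst σ A, subst σ B, subst σ C, rfl⟩
  | k1 φ ψ => exact ILProof.k1 _ _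
  | k2 φ ψ χ => exact ILProof.k2 _ _ _
  | dne φ => exact ILProof.dne _
  | L1 φ ψ => exact ILProof.L1 _ _
  | L2 φ => exact ILProof.L2 _
  | L3 φ => exact ILProof.L3 _
  | J1 φ ψ => exact ILProof.J1 _ _
  | J2 φ ψ χ => exact ILProof.J2 _ _ _
  | J3 φ ψ χ => exact ILProof.J3 _ _ _
  | J4 φ ψ => exact ILProof.J4 _ _
  | J5 φ => exact ILProof.J5 _
  | mp _ _ ih1 ih2 => exact ILProof.mp ih1 ih2
  | nec _ ih => exact ILProof.nec ih

def sl (l : List Formula) : ℕ → Formula := fun n => l.getD n Formula.bot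

theorem ptaut (τ : Formula) (σ : ℕ → Formula) (h : decideTaut τ = true) :
    ILProof Mschema (subst σ τ) :=
  subst_proof σ (tautDec τ h)

-- quick tests of the ptaut mechanism
example (a b : Formula) : ILProof Mschema ((a.conj b).impl a) :=
  ptaut ((Formula.var 0|>.conj (Formula.var 1)).impl (Formula.var 0)) (sl [a, b]) (by decide)

example (a b : Formula) : ILProof Mschema ((a.impl b).impl ((b.neg).impl (a.neg))) :=
  ptaut (((Formula.var 0).impl (Formula.var 1)).impl
    (((Formula.var 1).neg).impl ((Formula.var 0).neg))) (sl [a, b]) (by decide)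

def fv (n : ℕ) : Formula := Formula.var n

-- 7 atoms stress test
example (a b c d e f g : Formula) :
    ILProof Mschema ((a.impl (b.impl (c.impl d))).impl
      ((e.impl (c.impl (f.impl g))).impl ((c.impl f).impl
        (((a.conj e).conj (b.conj c)).impl (d.conj g))))) :=
  ptaut (((fv 0).impl ((fv 1).impl ((fv 2).impl (fv 3)))).impl
      (((fv 4).impl ((fv 2).impl ((fv 5).impl (fv 6)))).impl (((fv 2).impl (fv 5)).impl
        ((((fv 0).conj (fv 4)).conj ((fv 1).conj (fv 2))).impl ((fv 3).conj (fv 6))))))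
    (sl [a,b,c,d,e,f,g]) (by decide)

end ILAux
namespace ILAux
open Formula

abbrev Thm (φ : Formula) : Prop := ILProof Mschema φ

theorem boxMono {a b : Formula} (h : Thm (a.impl b)) : Thm ((box a).impl (box b)) :=
  ILProof.mp (ILProof.L1 a b) (ILProof.nec h)

theorem K2h {a b c : Formula} (h : Thm (a.impl (b.impl c))) :
    Thm ((box a).impl ((box b).impl (box c))) :=
  impTrans (boxMono h) (ILProof.L1 b c)

theorem K3h {a b c d : Formula} (h : Thm (a.impl (b.impl (c.impl d)))) :
    Thm ((box a).impl ((box b).impl ((box c).impl (box d)))) :=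
  ILProof.mp (ILProof.mp
    (ptaut (((fv 0).impl ((fv 1).impl (fv 2))).impl
      (((fv 2).impl ((fv 3).impl (fv 4))).impl ((fv 0).impl ((fv 1).impl ((fv 3).impl (fv 4))))))
      (sl [box a, box b, box (c.impl d), box c, box d]) (by decide))
    (K2h h)) (ILProof.L1 c d)

theorem ctr (a b : Formula) : Thm ((a.impl b).impl ((b.neg).impl (a.neg))) :=
  ptaut (((fv 0).impl (fv 1)).impl (((fv 1).neg).impl ((fv 0).neg))) (sl [a, b]) (by decide)

theorem dK (a b : Formula) : Thm ((box (a.impl b)).impl ((dia a).impl (dia b))) :=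
  ILProof.mp (ILProof.mp
    (ptaut (((fv 0).impl (fv 1)).impl
        (((fv 1).impl ((fv 2).impl (fv 3))).impl ((fv 0).impl (((fv 3).neg).impl ((fv 2).neg)))))
      (sl [box (a.impl b), box ((b.neg).impl (a.neg)), box b.neg, box a.neg]) (by decide))
    (boxMono (ctr a b))) (ILProof.L1 b.neg a.neg)

theorem diadia (c : Formula) : Thm ((dia (c.disj (dia c))).impl (dia c)) := by
  have hτ : Thm ((c.neg).impl ((box c.neg).impl ((c.disj (dia c)).neg))) :=
    ptaut (((fv 0).neg).impl ((fv 1).impl (((fv 0).disj ((fv 1).neg)).neg)))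
      (sl [c, box c.neg]) (by decide)
  have d0 := K2h hτ
  have e : Thm ((box c.neg).impl (box (c.disj (dia c)).neg)) :=
    ILProof.mp (ILProof.mp (ILProof.k2 _ _ _) d0) (ILProof.L2 c.neg)
  exact ILProof.mp (ctr _ _) e

theorem diaConj (x y : Formula) : Thm ((box x).impl ((dia y).impl (dia (y.conj x)))) := by
  have hτ : Thm (x.impl (((y.conj x).neg).impl (y.neg))) :=
    ptaut ((fv 0).impl ((((fv 1).conj (fv 0)).neg).impl ((fv 1).neg))) (sl [x, y]) (by decide)
  have d0 := K2h hτ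
  exact ILProof.mp
    (ptaut (((fv 0).impl ((fv 1).impl (fv 2))).impl
        ((fv 0).impl (((fv 2).neg).impl ((fv 1).neg))))
      (sl [box x, box (y.conj x).neg, box y.neg]) (by decide)) d0

theorem andI {x y : Formula} (h1 : Thm x) (h2 : Thm y) : Thm (x.conj y) :=
  ILProof.mp (ILProof.mp
    (ptaut ((fv 0).impl ((fv 1).impl ((fv 0).conj (fv 1)))) (sl [x, y]) (by decide)) h1) h2

theorem boxpair {φ : Formula} (h : Thm φ) : Thm (φ.conj (box φ)) :=
  andI h (ILProof.nec h)

theorem boxreg1 {x y : Formula} (h : Thm (x.impl y)) :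
    Thm ((x.conj (box x)).impl (y.conj (box y))) :=
  ILProof.mp (ILProof.mp
    (ptaut (((fv 0).impl (fv 1)).impl
        (((fv 2).impl (fv 3)).impl (((fv 0).conj (fv 2)).impl ((fv 1).conj (fv 3)))))
      (sl [x, y, box x, box y]) (by decide)) h) (boxMono h)

theorem boxreg2 {x y z : Formula} (h : Thm (x.impl (y.impl z))) :
    Thm (((x.conj (box x)).conj (y.conj (box y))).impl (z.conj (box z))) :=
  ILProof.mp (ILProof.mp
    (ptaut (((fv 0).impl ((fv 1).impl (fv 2))).impl
        (((fv 3).impl ((fv 4).impl (fv 5))).impl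
          ((((fv 0).conj (fv 3)).conj ((fv 1).conj (fv 4))).impl ((fv 2).conj (fv 5)))))
      (sl [x, y, z, box x, box y, box z]) (by decide)) h) (K2h h)

theorem boxreg2b {x y z : Formula} (h : Thm (x.impl (y.impl ((box y).impl z)))) :
    Thm (((x.conj (box x)).conj (y.conj (box y))).impl (z.conj (box z))) :=
  ILProof.mp (ILProof.mp (ILProof.mp
    (ptaut (((fv 0).impl ((fv 1).impl ((fv 2).impl (fv 3)))).impl
        (((fv 4).impl ((fv 2).impl ((fv 5).impl (fv 6)))).impl
          (((fv 2).impl (fv 5)).impl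
            ((((fv 0).conj (fv 4)).conj ((fv 1).conj (fv 2))).impl ((fv 3).conj (fv 6))))))
      (sl [x, y, box y, z, box x, box (box y), box z]) (by decide)) h)
    (K3h h)) (ILProof.L2 y)

/-- The "new root" translation: boxes and ▷ get strengthened by their reflexive
content, with untouched interiors. -/
def U : Formula → Formula
  | .bot => .bot
  | .var n => .var n
  | .impl a b => (U a).impl (U b)
  | .box a => a.conj (Formula.box a)
  | .rhd a b => (a.impl (b.disj b.dia)).conj (Formula.box (a.impl (b.disj b.dia)))

theorem uL1 (φ ψ : Formula) :
    Thm (((φ.impl ψ).conj (box (φ.impl ψ))).impl ((φ.conj (box φ)).impl (ψ.conj (box ψ)))) :=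
  ILProof.mp
    (ptaut (((fv 2).impl ((fv 3).impl (fv 4))).impl
        ((((fv 0).impl (fv 1)).conj (fv 2)).impl (((fv 0).conj (fv 3)).impl ((fv 1).conj (fv 4)))))
      (sl [φ, ψ, box (φ.impl ψ), box φ, box ψ]) (by decide)) (ILProof.L1 φ ψ)

theorem uL2 (φ : Formula) :
    Thm ((φ.conj (box φ)).impl ((box φ).conj (box (box φ)))) :=
  ILProof.mp
    (ptaut (((fv 1).impl (fv 2)).impl (((fv 0).conj (fv 1)).impl ((fv 1).conj (fv 2))))
      (sl [φ, box φ, box (box φ)]) (by decide)) (ILProof.L2 φ)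

theorem uL3 (φ : Formula) :
    Thm ((((box φ).impl φ).conj (box ((box φ).impl φ))).impl (φ.conj (box φ))) :=
  ILProof.mp
    (ptaut (((fv 2).impl (fv 1)).impl
        ((((fv 1).impl (fv 0)).conj (fv 2)).impl ((fv 0).conj (fv 1))))
      (sl [φ, box φ, box ((box φ).impl φ)]) (by decide)) (ILProof.L3 φ)

theorem uJ1 (φ ψ : Formula) :
    Thm (((φ.impl ψ).conj (box (φ.impl ψ))).impl
      ((φ.impl (ψ.disj ψ.dia)).conj (box (φ.impl (ψ.disj ψ.dia))))) :=
  boxreg1 (ptaut (((fv 0).impl (fv 1)).impl ((fv 0).impl ((fv 1).disj ((fv 2).neg))))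
    (sl [φ, ψ, box ψ.neg]) (by decide))

theorem uJ5 (φ : Formula) :
    Thm (((φ.dia).impl (φ.disj φ.dia)).conj (box ((φ.dia).impl (φ.disj φ.dia)))) :=
  boxpair (ptaut (((fv 1).neg).impl ((fv 0).disj ((fv 1).neg))) (sl [φ, box φ.neg]) (by decide))

theorem uJ3 (φ ψ χ : Formula) :
    Thm ((((φ.impl (χ.disj χ.dia)).conj (box (φ.impl (χ.disj χ.dia)))).conj
          ((ψ.impl (χ.disj χ.dia)).conj (box (ψ.impl (χ.disj χ.dia))))).impl
        (((φ.disj ψ).impl (χ.disj χ.dia)).conj (box ((φ.disj ψ).impl (χ.disj χ.dia))))) :=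
  boxreg2 (ptaut (((fv 0).impl ((fv 2).disj ((fv 3).neg))).impl
      (((fv 1).impl ((fv 2).disj ((fv 3).neg))).impl
        (((fv 0).disj (fv 1)).impl ((fv 2).disj ((fv 3).neg)))))
    (sl [φ, ψ, χ, box χ.neg]) (by decide))

theorem mdia (a b : Formula) :
    Thm ((box (a.impl (b.disj b.dia))).impl ((dia a).impl (dia b))) :=
  ILProof.mp (ILProof.mp
    (ptaut (((fv 0).impl ((fv 1).impl (fv 2))).impl
        (((fv 2).impl (fv 3)).impl ((fv 0).impl ((fv 1).impl (fv 3)))))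
      (sl [box (a.impl (b.disj b.dia)), dia a, dia (b.disj b.dia), dia b]) (by decide))
    (dK a (b.disj b.dia))) (diadia b)

theorem uJ2 (φ ψ χ : Formula) :
    Thm ((((φ.impl (ψ.disj ψ.dia)).conj (box (φ.impl (ψ.disj ψ.dia)))).conj
          ((ψ.impl (χ.disj χ.dia)).conj (box (ψ.impl (χ.disj χ.dia))))).impl
        ((φ.impl (χ.disj χ.dia)).conj (box (φ.impl (χ.disj χ.dia))))) := by
  have m := mdia ψ χ
  have S : Thm ((φ.impl (ψ.disj ψ.dia)).impl ((ψ.impl (χ.disj χ.dia)).impl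
      ((box (ψ.impl (χ.disj χ.dia))).impl (φ.impl (χ.disj χ.dia))))) :=
    ILProof.mp
      (ptaut (((fv 5).impl (((fv 3).neg).impl ((fv 4).neg))).impl
          (((fv 0).impl ((fv 1).disj ((fv 3).neg))).impl
            (((fv 1).impl ((fv 2).disj ((fv 4).neg))).impl
              ((fv 5).impl ((fv 0).impl ((fv 2).disj ((fv 4).neg)))))))
        (sl [φ, ψ, χ, box ψ.neg, box χ.neg, box (ψ.impl (χ.disj χ.dia))]) (by decide)) m
  exact boxreg2b S

theorem uJ4 (φ ψ : Formula) :
    Thm (((φ.impl (ψ.disj ψ.dia)).conj (box (φ.impl (ψ.disj ψ.dia)))).impl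
      ((((φ.neg).conj (box φ.neg)).neg).impl (((ψ.neg).conj (box ψ.neg)).neg))) :=
  ILProof.mp
    (ptaut (((fv 4).impl (((fv 2).neg).impl ((fv 3).neg))).impl
        ((((fv 0).impl ((fv 1).disj ((fv 3).neg))).conj (fv 4)).impl
          (((((fv 0).neg).conj (fv 2)).neg).impl ((((fv 1).neg).conj (fv 3)).neg))))
      (sl [φ, ψ, box φ.neg, box ψ.neg, box (φ.impl (ψ.disj ψ.dia))]) (by decide))
    (mdia φ ψ)

theorem uM (A B C : Formula) :
    Thm (((A.impl (B.disj B.dia)).conj (box (A.impl (B.disj B.dia)))).impl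
      (((A.conj (box C)).impl ((B.conj (box C)).disj ((B.conj (box C)).dia))).conj
        (box ((A.conj (box C)).impl ((B.conj (box C)).disj ((B.conj (box C)).dia)))))) := by
  have h2 := diaConj (box C) B
  have hPQ : Thm ((A.impl (B.disj B.dia)).impl
      ((A.conj (box C)).impl ((B.conj (box C)).disj ((B.conj (box C)).dia)))) :=
    ILProof.mp (ILProof.mp
      (ptaut (((fv 2).impl (fv 4)).impl
          (((fv 4).impl (((fv 3).neg).impl ((fv 5).neg))).impl
            (((fv 0).impl ((fv 1).disj ((fv 3).neg))).impl
              (((fv 0).conj (fv 2)).impl (((fv 1).conj (fv 2)).disj ((fv 5).neg))))))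
        (sl [A, B, box C, box B.neg, box (box C), box (B.conj (box C)).neg]) (by decide))
      (ILProof.L2 C)) h2
  exact boxreg1 hPQ

theorem usound {φ : Formula} (h : ILProof Mschema φ) : ILProof Mschema (U φ) := by
  induction h with
  | ax hφ =>
    obtain ⟨A, B, C, rfl⟩ := hφ
    exact uM A B C
  | k1 φ ψ => exact ILProof.k1 (U φ) (U ψ)
  | k2 φ ψ χ => exact ILProof.k2 (U φ) (U ψ) (U χ)
  | dne φ => exact ILProof.dne (U φ)
  | L1 φ ψ => exact uL1 φ ψ
  | L2 φ => exact uL2 φ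
  | L3 φ => exact uL3 φ
  | J1 φ ψ => exact uJ1 φ ψ
  | J2 φ ψ χ => exact uJ2 φ ψ χ
  | J3 φ ψ χ => exact uJ3 φ ψ χ
  | J4 φ ψ => exact uJ4 φ ψ
  | J5 φ => exact uJ5 φ
  | mp _ _ ih1 ih2 => exact ILProof.mp ih1 ih2
  | nec hφ _ => exact boxpair hφ

end ILAux

open Formula ILAux

/-- IL(M) ⊢ ⊤ ▷ A iff IL(M) ⊢ Box ⊥ → A. -/
theorem ilm_top_rhd (A : Formula) :
    ILMProvable (Formula.rhd Formula.top A) ↔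
      ILMProvable ((Formula.box Formula.bot).impl A) := by
  constructor
  · intro H
    have uH : ILProof Mschema (U (Formula.rhd Formula.top A)) := usound H
    have hX : Thm (Formula.top.impl (A.disj A.dia)) :=
      ILProof.mp (ptaut (((fv 0).conj (fv 1)).impl (fv 0))
        (sl [Formula.top.impl (A.disj A.dia), box (Formula.top.impl (A.disj A.dia))])
        (by decide)) uH
    have hTop : Thm Formula.top := impRefl Formula.bot
    have hD : Thm (A.disj A.dia) := ILProof.mp hX hTop
    have hBox : Thm ((box Formula.bot).impl (box A.neg)) := boxMono (exFalso A.neg)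
    exact ILProof.mp (ILProof.mp
      (ptaut ((((fv 0).neg).impl ((fv 1).neg)).impl
          (((fv 2).impl (fv 1)).impl ((fv 2).impl (fv 0))))
        (sl [A, box A.neg, box Formula.bot]) (by decide)) hD) hBox
  · intro G
    have G' : ILProof Mschema ((box Formula.bot).impl A) := G
    have b1 : Thm ((A.neg).impl ((box Formula.bot).neg)) :=
      ILProof.mp (ctr (box Formula.bot) A) G'
    have b4 : Thm ((box A.neg).impl (box Formula.bot)) :=
      impTrans (boxMono b1) (ILProof.L3 Formula.bot)
    have hD : Thm (A.disj A.dia) :=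
      ILProof.mp (ILProof.mp
        (ptaut (((fv 1).impl (fv 2)).impl
            (((fv 2).impl (fv 0)).impl (((fv 0).neg).impl ((fv 1).neg))))
          (sl [A, box A.neg, box Formula.bot]) (by decide)) b4) G'
    have c0 : Thm (Formula.top.impl (A.disj A.dia)) := ILProof.mp (ILProof.k1 _ Formula.top) hD
    have c1 : Thm (Formula.rhd Formula.top (A.disj A.dia)) :=
      ILProof.mp (ILProof.J1 Formula.top (A.disj A.dia)) (ILProof.nec c0)
    have c2 : Thm (Formula.rhd A A) := ILProof.mp (ILProof.J1 A A) (ILProof.nec (impRefl A))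
    have c4 : Thm (Formula.rhd (A.disj A.dia) A) :=
      ILProof.mp (ILProof.J3 A A.dia A) (andI c2 (ILProof.J5 A))
    exact ILProof.mp (ILProof.J2 Formula.top (A.disj A.dia) A) (andI c1 c4)
end

section
/- For any maximal IL(M)-consistent sets Δ_0 and Δ_1, there exists a maximal IL(M)-consistent set Γ with Γ ≺ Δ_0 and Γ ≺ Δ_1 (where Γ ≺ Δ means Box A ∈ Γ implies A, Box A ∈ Δ). -/
open Formula

section Aux
open Formula

variable {Ax : Set Formula}

namespace ILProof

theorem imp_trans {a b c : Formula} (h1 : ILProof Ax (a.impl b)) (h2 : ILProof Ax (b.impl c)) :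
    ILProof Ax (a.impl c) :=
  mp (mp (k2 a b c) (mp (k1 (b.impl c) a) h2)) h1

theorem imp_id (a : Formula) : ILProof Ax (a.impl a) :=
  mp (mp (k2 a (a.impl a) a) (k1 a (a.impl a))) (k1 a a)

theorem imp_intro_left {x y : Formula} (a : Formula) (h : ILProof Ax (x.impl y)) :
    ILProof Ax ((a.impl x).impl (a.impl y)) :=
  mp (k2 a x y) (mp (k1 (x.impl y) a) h)

end ILProof

open ILProof

/-- Provability from a list context. -/
def Ctx (Ax : Set Formula) (L : List Formula) (t : Formula) : Prop :=
  ILProof Ax (L.foldr Formula.impl t)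

theorem ctx_of_prf {t : Formula} (L : List Formula) (h : ILProof Ax t) : Ctx Ax L t := by
  induction L with
  | nil => exact h
  | cons a L ih => exact ILProof.mp (ILProof.k1 _ a) ih

theorem imp_lift {t : Formula} (L : List Formula) :
    ILProof Ax (t.impl (L.foldr Formula.impl t)) := by
  induction L with
  | nil => exact imp_id t
  | cons a L ih => exact imp_trans ih (ILProof.k1 _ a)

theorem ctx_mem {a : Formula} {L : List Formula} (h : a ∈ L) : Ctx Ax L a := by
  induction L with
  | nil => cases h
  | cons b L ih =>
    rcases List.mem_cons.1 h with h' | h'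
    · subst h'; exact imp_lift L
    · exact ILProof.mp (ILProof.k1 _ b) (ih h')


theorem ctx_hyp0 (x : Formula) (L : List Formula) : Ctx Ax (x :: L) x :=
  ctx_mem (List.mem_cons_self (a := x) (l := L))

theorem ctx_hyp1 (x y : Formula) (L : List Formula) : Ctx Ax (x :: y :: L) y :=
  ctx_mem (List.mem_cons_of_mem x (List.mem_cons_self (a := y) (l := L)))

theorem ctx_hyp2 (x y z : Formula) (L : List Formula) : Ctx Ax (x :: y :: z :: L) z :=
  ctx_mem (List.mem_cons_of_mem x (List.mem_cons_of_mem y (List.mem_cons_self (a := z) (l := L))))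

theorem ctx_mp_thm (L : List Formula) (x y : Formula) :
    ILProof Ax ((L.foldr Formula.impl (x.impl y)).impl
      ((L.foldr Formula.impl x).impl (L.foldr Formula.impl y))) := by
  induction L with
  | nil => exact imp_id _
  | cons a L ih =>
    exact imp_trans (imp_intro_left a ih) (ILProof.k2 a _ _)

theorem ctx_mp {L : List Formula} {x y : Formula}
    (h1 : Ctx Ax L (x.impl y)) (h2 : Ctx Ax L x) : Ctx Ax L y :=
  ILProof.mp (ILProof.mp (ctx_mp_thm L x y) h1) h2

theorem ctx_cut {L₁ L₂ : List Formula} (hsub : ∀ x ∈ L₁, x ∈ L₂) :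
    ∀ t : Formula, Ctx Ax L₂ (L₁.foldr Formula.impl t) → Ctx Ax L₂ t := by
  induction L₁ with
  | nil => intro t h; exact h
  | cons a L ih =>
    intro t h
    exact ih (fun x hx => hsub x (List.mem_cons_of_mem a hx)) t
      (ctx_mp h (ctx_mem (hsub a (List.mem_cons_self (a := a) (l := L)))))

theorem ctx_subset {L₁ L₂ : List Formula} {t : Formula} (hsub : ∀ x ∈ L₁, x ∈ L₂)
    (h : Ctx Ax L₁ t) : Ctx Ax L₂ t :=
  ctx_cut hsub t (ctx_of_prf L₂ h)

theorem imp_swap_thm (a b c : Formula) :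
    ILProof Ax ((a.impl (b.impl c)).impl (b.impl (a.impl c))) := by
  have h : Ctx Ax [a.impl (b.impl c), b, a] c :=
    ctx_mp (ctx_mp (ctx_hyp0 _ _) (ctx_hyp2 _ _ _ _)) (ctx_hyp1 _ _ _)
  exact h

theorem ded_thm (L : List Formula) (φ ψ : Formula) :
    ILProof Ax ((φ.impl (L.foldr Formula.impl ψ)).impl (L.foldr Formula.impl (φ.impl ψ))) := by
  induction L with
  | nil => exact imp_id _
  | cons b L ih => exact imp_trans (imp_swap_thm φ b _) (imp_intro_left b ih)

/-- Provability from a set of hypotheses. -/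
def SPrv (Ax : Set Formula) (Γ : Set Formula) (t : Formula) : Prop :=
  ∃ L : List Formula, (∀ ψ ∈ L, ψ ∈ Γ) ∧ ILProof Ax (L.foldr Formula.impl t)

theorem consistent_iff {Γ : Set Formula} : Consistent Ax Γ ↔ ¬ SPrv Ax Γ Formula.bot :=
  Iff.rfl

theorem sprv_of_mem {Γ : Set Formula} {t : Formula} (h : t ∈ Γ) : SPrv Ax Γ t :=
  ⟨[t], by simpa using h, imp_id t⟩

theorem sprv_of_prf {Γ : Set Formula} {t : Formula} (h : ILProof Ax t) : SPrv Ax Γ t :=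
  ⟨[], by simp, h⟩

theorem sprv_mp {Γ : Set Formula} {x y : Formula}
    (h1 : SPrv Ax Γ (x.impl y)) (h2 : SPrv Ax Γ x) : SPrv Ax Γ y := by
  obtain ⟨L₁, hL₁, hp₁⟩ := h1
  obtain ⟨L₂, hL₂, hp₂⟩ := h2
  refine ⟨L₁ ++ L₂, ?_, ?_⟩
  · intro ψ hψ; rcases List.mem_append.1 hψ with h | h
    · exact hL₁ ψ h
    · exact hL₂ ψ h
  · exact ctx_mp (L := L₁ ++ L₂)
      (ctx_subset (fun x hx => List.mem_append_left _ hx) hp₁)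
      (ctx_subset (fun x hx => List.mem_append_right _ hx) hp₂)

theorem sprv_deduction {Γ : Set Formula} {φ ψ : Formula}
    (h : SPrv Ax (Γ ∪ {φ}) ψ) : SPrv Ax Γ (φ.impl ψ) := by
  classical
  obtain ⟨L, hL, hp⟩ := h
  set M : List Formula := L.filter (fun x => x ≠ φ) with hM
  have hsub : ∀ x ∈ L, x ∈ φ :: M := by
    intro x hx
    by_cases hxφ : x = φ
    · exact hxφ ▸ List.mem_cons_self (a := φ) (l := M)
    · exact List.mem_cons_of_mem _ (List.mem_filter.2 ⟨hx, by simpa using hxφ⟩)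
  have h2 : Ctx Ax (φ :: M) ψ := ctx_subset hsub hp
  refine ⟨M, ?_, ILProof.mp (ded_thm M φ ψ) h2⟩
  intro x hx
  have := List.mem_filter.1 hx
  rcases hL x this.1 with h | h
  · exact h
  · exact absurd (by simpa using h) (by simpa using this.2)

-- Propositional lemmas
theorem dni (a : Formula) : ILProof Ax (a.impl a.neg.neg) := by
  have h : Ctx Ax [a, a.neg] Formula.bot := ctx_mp (ctx_hyp1 _ _ _) (ctx_hyp0 _ _)
  exact h

theorem efq (a : Formula) : ILProof Ax (Formula.bot.impl a) := by
  have h : Ctx Ax [Formula.bot, a.neg] Formula.bot := ctx_hyp0 _ _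
  exact imp_trans (h : ILProof Ax (Formula.bot.impl a.neg.neg)) (ILProof.dne a)

theorem neg_imp_any (a b : Formula) : ILProof Ax (a.neg.impl (a.impl b)) := by
  have h : Ctx Ax [a.neg, a] Formula.bot := ctx_mp (ctx_hyp0 _ _) (ctx_hyp1 _ _ _)
  have h2 : ILProof Ax (a.neg.impl (a.impl Formula.bot)) := h
  exact imp_trans h2 (imp_intro_left a (efq b))

theorem andI (a b : Formula) : ILProof Ax (a.impl (b.impl (a.conj b))) := by
  have h : Ctx Ax [a, b, a.impl b.neg] Formula.bot :=
    ctx_mp (ctx_mp (ctx_hyp2 _ _ _ _) (ctx_hyp0 _ _)) (ctx_hyp1 _ _ _)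
  exact h

theorem andE1 (a b : Formula) : ILProof Ax ((a.conj b).impl a) := by
  have t1 : ILProof Ax (a.neg.impl (a.impl b.neg)) := neg_imp_any a b.neg
  have h : Ctx Ax [(a.impl b.neg).neg, a.neg] Formula.bot :=
    ctx_mp (ctx_hyp0 _ _)
      (ctx_mp (ctx_of_prf _ t1) (ctx_hyp1 _ _ _))
  exact imp_trans (h : ILProof Ax ((a.conj b).impl a.neg.neg)) (ILProof.dne a)

theorem andE2 (a b : Formula) : ILProof Ax ((a.conj b).impl b) := by
  have h : Ctx Ax [(a.impl b.neg).neg, b.neg] Formula.bot :=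
    ctx_mp (ctx_hyp0 _ _)
      (ctx_mp (ctx_of_prf _ (ILProof.k1 b.neg a)) (ctx_hyp1 _ _ _))
  exact imp_trans (h : ILProof Ax ((a.conj b).impl b.neg.neg)) (ILProof.dne b)

theorem and_intro {a b : Formula} (ha : ILProof Ax a) (hb : ILProof Ax b) :
    ILProof Ax (a.conj b) :=
  ILProof.mp (ILProof.mp (andI a b) ha) hb

theorem imp_conj {a b c d : Formula} (h1 : ILProof Ax (a.impl c)) (h2 : ILProof Ax (b.impl d)) :
    ILProof Ax ((a.conj b).impl (c.conj d)) := by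
  have pc : Ctx Ax [a.conj b] c :=
    ctx_mp (ctx_of_prf _ (imp_trans (andE1 a b) h1)) (ctx_hyp0 _ _)
  have pd : Ctx Ax [a.conj b] d :=
    ctx_mp (ctx_of_prf _ (imp_trans (andE2 a b) h2)) (ctx_hyp0 _ _)
  exact ctx_mp (ctx_mp (ctx_of_prf _ (andI c d)) pc) pd

theorem neg_conj_imp (a c : Formula) :
    ILProof Ax ((a.conj c).neg.impl (c.impl a.neg)) := by
  have h : Ctx Ax [(a.conj c).neg, c, a] Formula.bot :=
    ctx_mp (ctx_hyp0 _ _)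
      (ctx_mp (ctx_mp (ctx_of_prf _ (andI a c)) (ctx_hyp2 _ _ _ _)) (ctx_hyp1 _ _ _))
  exact h

-- box lemmas
theorem box_mono {a b : Formula} (h : ILProof Ax (a.impl b)) :
    ILProof Ax ((box a).impl (box b)) :=
  ILProof.mp (ILProof.L1 a b) (ILProof.nec h)

theorem box_conj (a b : Formula) :
    ILProof Ax ((box a).impl ((box b).impl (box (a.conj b)))) :=
  imp_trans (box_mono (andI a b)) (ILProof.L1 b (a.conj b))

theorem box_top : ILProof Ax (box Formula.top) := ILProof.nec (imp_id Formula.bot)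

end Aux

section Main
open Formula ILProof

/-- Provability valuation: box means "provable", rhd means the Con-transfer property. -/
def pval : Formula → Prop
  | Formula.bot => False
  | Formula.var _ => True
  | Formula.impl a b => pval a → pval b
  | Formula.box a => ILMProvable a
  | Formula.rhd a b => ∀ χ : Formula,
      ¬ ILMProvable ((a.conj (box χ)).neg) → ¬ ILMProvable ((b.conj (box χ)).neg)

theorem pval_bot : pval Formula.bot ↔ False := Iff.rfl
theorem pval_impl (a b : Formula) : pval (a.impl b) ↔ (pval a → pval b) := Iff.rfl
theorem pval_box (a : Formula) : pval (box a) ↔ ILMProvable a := Iff.rfl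
theorem pval_rhd (a b : Formula) : pval (rhd a b) ↔ ∀ χ : Formula,
    ¬ ILMProvable ((a.conj (box χ)).neg) → ¬ ILMProvable ((b.conj (box χ)).neg) := Iff.rfl

theorem pval_conj (a b : Formula) : pval (a.conj b) ↔ (pval a ∧ pval b) := by
  show ((pval a → (pval b → False)) → False) ↔ _
  tauto

theorem pval_dia (a : Formula) : pval (dia a) ↔ ¬ ILMProvable a.neg := Iff.rfl

theorem boxpair1 (A C χ : Formula) :
    ILProof Mschema (((A.conj (box C)).conj (box χ)).impl (A.conj (box (C.conj χ)))) := by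
  have pA : Ctx Mschema [(A.conj (box C)).conj (box χ)] A :=
    ctx_mp (ctx_of_prf _ (imp_trans (andE1 _ _) (andE1 A (box C)))) (ctx_hyp0 _ _)
  have pC : Ctx Mschema [(A.conj (box C)).conj (box χ)] (box C) :=
    ctx_mp (ctx_of_prf _ (imp_trans (andE1 _ _) (andE2 A (box C)))) (ctx_hyp0 _ _)
  have pχ : Ctx Mschema [(A.conj (box C)).conj (box χ)] (box χ) :=
    ctx_mp (ctx_of_prf _ (andE2 _ _)) (ctx_hyp0 _ _)
  have pb : Ctx Mschema [(A.conj (box C)).conj (box χ)] (box (C.conj χ)) :=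
    ctx_mp (ctx_mp (ctx_of_prf _ (box_conj C χ)) pC) pχ
  exact ctx_mp (ctx_mp (ctx_of_prf _ (andI A (box (C.conj χ)))) pA) pb

theorem boxpair2 (B C χ : Formula) :
    ILProof Mschema ((B.conj (box (C.conj χ))).impl ((B.conj (box C)).conj (box χ))) := by
  have pB : Ctx Mschema [B.conj (box (C.conj χ))] B :=
    ctx_mp (ctx_of_prf _ (andE1 _ _)) (ctx_hyp0 _ _)
  have pb : Ctx Mschema [B.conj (box (C.conj χ))] (box (C.conj χ)) :=
    ctx_mp (ctx_of_prf _ (andE2 _ _)) (ctx_hyp0 _ _)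
  have pC : Ctx Mschema [B.conj (box (C.conj χ))] (box C) :=
    ctx_mp (ctx_of_prf _ (box_mono (andE1 C χ))) pb
  have pχ : Ctx Mschema [B.conj (box (C.conj χ))] (box χ) :=
    ctx_mp (ctx_of_prf _ (box_mono (andE2 C χ))) pb
  have pBC : Ctx Mschema [B.conj (box (C.conj χ))] (B.conj (box C)) :=
    ctx_mp (ctx_mp (ctx_of_prf _ (andI B (box C))) pB) pC
  exact ctx_mp (ctx_mp (ctx_of_prf _ (andI (B.conj (box C)) (box χ))) pBC) pχ

theorem pval_sound {φ : Formula} (h : ILMProvable φ) : pval φ := by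
  induction h with
  | ax hφ =>
    obtain ⟨A, B, C, rfl⟩ := hφ
    rw [pval_impl, pval_rhd, pval_rhd]
    intro H χ hcon
    have step1 : ¬ ILMProvable ((A.conj (box (C.conj χ))).neg) := by
      intro p; exact hcon (imp_trans (boxpair1 A C χ) p)
    have step2 := H (C.conj χ) step1
    intro q; exact step2 (imp_trans (boxpair2 B C χ) q)
  | k1 φ ψ => exact fun h _ => h
  | k2 φ ψ χ => exact fun h1 h2 h3 => h1 h3 (h2 h3)
  | dne φ => exact fun h => Classical.byContradiction (fun hn => h hn)
  | L1 φ ψ => exact fun h1 h2 => ILProof.mp h1 h2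
  | L2 φ => exact fun h => ILProof.nec h
  | L3 φ => exact fun h => ILProof.mp h (ILProof.mp (ILProof.L3 φ) (ILProof.nec h))
  | J1 φ ψ =>
    rw [pval_impl, pval_box, pval_rhd]
    intro h χ hcon q
    exact hcon (imp_trans (imp_conj h (imp_id (box χ))) q)
  | J2 φ ψ χ =>
    rw [pval_impl, pval_conj, pval_rhd, pval_rhd, pval_rhd]
    rintro ⟨h1, h2⟩ χ' hc
    exact h2 χ' (h1 χ' hc)
  | J3 φ ψ χ =>
    rw [pval_impl, pval_conj, pval_rhd, pval_rhd, pval_rhd]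
    rintro ⟨h1, h2⟩ c hcon
    by_cases hφ : ILMProvable ((φ.conj (box c)).neg)
    · by_cases hψ : ILMProvable ((ψ.conj (box c)).neg)
      · exfalso
        apply hcon
        have pd : Ctx Mschema [(φ.disj ψ).conj (box c)] (φ.disj ψ) :=
          ctx_mp (ctx_of_prf _ (andE1 _ _)) (ctx_hyp0 _ _)
        have pc : Ctx Mschema [(φ.disj ψ).conj (box c)] (box c) :=
          ctx_mp (ctx_of_prf _ (andE2 _ _)) (ctx_hyp0 _ _)
        have nφ : Ctx Mschema [(φ.disj ψ).conj (box c)] φ.neg :=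
          ctx_mp (ctx_of_prf _ (ILProof.mp (neg_conj_imp φ (box c)) hφ)) pc
        have nψ : Ctx Mschema [(φ.disj ψ).conj (box c)] ψ.neg :=
          ctx_mp (ctx_of_prf _ (ILProof.mp (neg_conj_imp ψ (box c)) hψ)) pc
        have pψ : Ctx Mschema [(φ.disj ψ).conj (box c)] ψ := ctx_mp pd nφ
        exact (ctx_mp nψ pψ : Ctx Mschema [(φ.disj ψ).conj (box c)] Formula.bot)
      · exact h2 c hψ
    · exact h1 c hφ
  | J4 φ ψ =>
    rw [pval_impl, pval_rhd]
    intro H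
    show pval ((dia φ).impl (dia ψ))
    rw [pval_impl, pval_dia, pval_dia]
    intro hda hnb
    have h0 : ¬ ILMProvable ((φ.conj (box Formula.top)).neg) := by
      intro p
      apply hda
      have hent : Ctx Mschema [φ] (φ.conj (box Formula.top)) :=
        ctx_mp (ctx_mp (ctx_of_prf _ (andI φ (box Formula.top))) (ctx_hyp0 _ _))
          (ctx_of_prf _ box_top)
      exact imp_trans (hent : ILProof Mschema (φ.impl (φ.conj (box Formula.top)))) p
    exact H Formula.top h0 (imp_trans (andE1 ψ (box Formula.top)) hnb)
  | J5 φ =>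
    rw [pval_rhd]
    intro χ hcon q
    apply hcon
    have h1 : ILProof Mschema ((box χ).impl φ.neg) :=
      ILProof.mp (neg_conj_imp φ (box χ)) q
    have h3 : ILProof Mschema ((box χ).impl (box φ.neg)) :=
      imp_trans (ILProof.L2 χ) (box_mono h1)
    have pdia : Ctx Mschema [(dia φ).conj (box χ)] (dia φ) :=
      ctx_mp (ctx_of_prf _ (andE1 _ _)) (ctx_hyp0 _ _)
    have pbχ : Ctx Mschema [(dia φ).conj (box χ)] (box χ) :=
      ctx_mp (ctx_of_prf _ (andE2 _ _)) (ctx_hyp0 _ _)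
    have pbox : Ctx Mschema [(dia φ).conj (box χ)] (box φ.neg) :=
      ctx_mp (ctx_of_prf _ h3) pbχ
    exact (ctx_mp pdia pbox : Ctx Mschema [(dia φ).conj (box χ)] Formula.bot)
  | mp h1 h2 ih1 ih2 => exact ih1 ih2
  | nec h ih => exact h

theorem pval_foldr {t : Formula} :
    ∀ L : List Formula, (∀ x ∈ L, pval x) → pval (L.foldr Formula.impl t) → pval t := by
  intro L
  induction L with
  | nil => exact fun _ h => h
  | cons a L ih =>
    intro hall h
    exact ih (fun x hx => hall x (List.mem_cons_of_mem a hx))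
      (h (hall a (List.mem_cons_self (a := a) (l := L))))

theorem consistent_of_pval {S : Set Formula} (h : ∀ ψ ∈ S, pval ψ) :
    Consistent Mschema S := by
  rintro ⟨L, hL, hp⟩
  exact (pval_bot).1 (pval_foldr L (fun x hx => h x (hL x hx)) (pval_sound hp))

theorem lindenbaum {S : Set Formula} (h : Consistent Mschema S) :
    ∃ Γ : Set Formula, S ⊆ Γ ∧ MCS Mschema Γ := by
  classical
  have hzorn : ∀ c ⊆ {Δ : Set Formula | Consistent Mschema Δ},
      IsChain (fun x1 x2 => x1 ⊆ x2) c → c.Nonempty →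
      ∃ ub ∈ {Δ : Set Formula | Consistent Mschema Δ}, ∀ s ∈ c, s ⊆ ub := by
    intro c hc hchain hne
    refine ⟨⋃₀ c, ?_, fun s hs => Set.subset_sUnion_of_mem hs⟩
    rintro ⟨L, hL, hp⟩
    have : ∃ Δ ∈ c, ∀ x ∈ L, x ∈ Δ := by
      clear hp
      induction L with
      | nil => obtain ⟨Δ, hΔ⟩ := hne; exact ⟨Δ, hΔ, by simp⟩
      | cons a L ih =>
        obtain ⟨Δ, hΔc, hΔ⟩ := ih (fun x hx => hL x (List.mem_cons_of_mem a hx))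
        obtain ⟨Δ', hΔ'c, haΔ'⟩ := hL a (List.mem_cons_self (a := a) (l := L))
        by_cases heq : Δ = Δ'
        · exact ⟨Δ', hΔ'c, by
            intro x hx
            rcases List.mem_cons.1 hx with rfl | hx
            · exact haΔ'
            · exact heq ▸ hΔ x hx⟩
        · rcases hchain hΔc hΔ'c heq with hsub | hsub
          · refine ⟨Δ', hΔ'c, ?_⟩
            intro x hx
            rcases List.mem_cons.1 hx with rfl | hx
            · exact haΔ'
            · exact hsub (hΔ x hx)
          · refine ⟨Δ, hΔc, ?_⟩
            intro x hx
            rcases List.mem_cons.1 hx with rfl | hx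
            · exact hsub haΔ'
            · exact hΔ x hx
    obtain ⟨Δ, hΔc, hall⟩ := this
    exact hc hΔc ⟨L, hall, hp⟩
  obtain ⟨Γ, hSΓ, hΓmax⟩ :=
    zorn_subset_nonempty {Δ : Set Formula | Consistent Mschema Δ} hzorn S h
  have hΓcons : Consistent Mschema Γ := hΓmax.1
  refine ⟨Γ, hSΓ, hΓcons, ?_⟩
  intro φ
  by_contra hc2
  push_neg at hc2
  obtain ⟨hφ, hnφ⟩ := hc2
  have key : ∀ ψ : Formula, ψ ∉ Γ → SPrv Mschema Γ ψ.neg := by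
    intro ψ hψ
    have hic : ¬ Consistent Mschema (Γ ∪ {ψ}) := by
      intro hcons
      exact hψ (hΓmax.2 hcons Set.subset_union_left (Set.mem_union_right _ rfl))
    have := not_not.mp hic
    exact sprv_deduction this
  have p1 := key φ hφ
  have p2 := key φ.neg hnφ
  exact hΓcons (sprv_mp p2 p1)

theorem prec_of {Γ Δ : Set Formula} (hΓ : MCS Mschema Γ) (hΔ : MCS Mschema Δ)
    (hdia : ∀ A ∈ Δ, dia A ∈ Γ) : prec Γ Δ := by
  intro A hbox
  constructor
  · by_contra hA
    have hneg : A.neg ∈ Δ := (hΔ.2 A).resolve_left hA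
    have hd : dia A.neg ∈ Γ := hdia _ hneg
    apply hΓ.1
    refine ⟨[box A, (box A.neg.neg).neg], ?_, ?_⟩
    · intro ψ hψ
      rcases List.mem_cons.1 hψ with rfl | hψ
      · exact hbox
      · simp only [List.mem_cons, List.not_mem_nil, or_false] at hψ
        exact hψ ▸ hd
    · have m1 : Ctx Mschema [box A, (box A.neg.neg).neg] (box A) := ctx_hyp0 _ _
      have m2 : Ctx Mschema [box A, (box A.neg.neg).neg] ((box A.neg.neg).neg) :=
        ctx_hyp1 _ _ _
      have b1 : Ctx Mschema [box A, (box A.neg.neg).neg] (box A.neg.neg) :=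
        ctx_mp (ctx_of_prf _ (box_mono (dni A))) m1
      exact ctx_mp m2 b1
  · by_contra hA
    have hneg : (box A).neg ∈ Δ := (hΔ.2 (box A)).resolve_left hA
    have hd : dia (box A).neg ∈ Γ := hdia _ hneg
    apply hΓ.1
    refine ⟨[box A, (box (box A).neg.neg).neg], ?_, ?_⟩
    · intro ψ hψ
      rcases List.mem_cons.1 hψ with rfl | hψ
      · exact hbox
      · simp only [List.mem_cons, List.not_mem_nil, or_false] at hψ
        exact hψ ▸ hd
    · have m1 : Ctx Mschema [box A, (box (box A).neg.neg).neg] (box A) := ctx_hyp0 _ _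
      have m2 : Ctx Mschema [box A, (box (box A).neg.neg).neg] ((box (box A).neg.neg).neg) :=
        ctx_hyp1 _ _ _
      have b1 : Ctx Mschema [box A, (box (box A).neg.neg).neg] (box (box A).neg.neg) :=
        ctx_mp (ctx_of_prf _ (imp_trans (ILProof.L2 A) (box_mono (dni (box A))))) m1
      exact ctx_mp m2 b1

end Main

/-- any two maximal IL(M)-consistent sets have a common ≺-predecessor. -/
theorem ilm_common_predecessor (Δ₀ Δ₁ : Set Formula)
    (h₀ : MCS Mschema Δ₀) (h₁ : MCS Mschema Δ₁) :
    ∃ Γ : Set Formula, MCS Mschema Γ ∧ prec Γ Δ₀ ∧ prec Γ Δ₁ := by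
  classical
  set S : Set Formula :=
    {ψ | ∃ A ∈ Δ₀, ψ = Formula.dia A} ∪ {ψ | ∃ B ∈ Δ₁, ψ = Formula.dia B} with hS
  have hdia_val : ∀ {Δ : Set Formula}, MCS Mschema Δ → ∀ A ∈ Δ, pval (Formula.dia A) := by
    intro Δ hΔ A hA
    rw [pval_dia]
    intro hp
    exact hΔ.1 ⟨[A], by simpa using hA, hp⟩
  have hval : ∀ ψ ∈ S, pval ψ := by
    rintro ψ (⟨A, hA, rfl⟩ | ⟨B, hB, rfl⟩)
    · exact hdia_val h₀ A hA
    · exact hdia_val h₁ B hB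
  obtain ⟨Γ, hSΓ, hΓ⟩ := lindenbaum (consistent_of_pval hval)
  refine ⟨Γ, hΓ, ?_, ?_⟩
  · exact prec_of hΓ h₀ (fun A hA => hSΓ (Or.inl ⟨A, hA, rfl⟩))
  · exact prec_of hΓ h₁ (fun B hB => hSΓ (Or.inr ⟨B, hB, rfl⟩))
end
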